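/- arXiv:1901.08961 — 11 statements merged into one kernel-verified Lean document; each statement's English description precedes it below -/
import Mathlib

section
/- If a complete theory T is 𝒯-approximated, then for every theory T' ∈ 𝒯 the theory T is (𝒯 \ {T'})-approximated. -/
open FirstOrder Language Set

universe u v

namespace Approx

variable {L : FirstOrder.Language.{u, v}}

/-- A complete theory: a satisfiable set of sentences deciding every sentence. -/
def CompleteTheory (T : L.Theory) : Prop :=
  T.IsSatisfiable ∧ ∀ φ : L.Sentence, φ ∈ T ∨ φ.not ∈ T

/-- `T` is `𝒯`-approximated: `T ∉ 𝒯` and every sentence of `T` lies in some member of `𝒯`. -/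
def Approximated (𝒯 : Set L.Theory) (T : L.Theory) : Prop :=
  T ∉ 𝒯 ∧ ∀ φ ∈ T, ∃ T' ∈ 𝒯, φ ∈ T'

/-- The `φ`-neighbourhood `𝒯_φ` of a family of theories. -/
def Nbhd (𝒯 : Set L.Theory) (φ : L.Sentence) : Set L.Theory :=
  {T' ∈ 𝒯 | φ ∈ T'}

/-- An accumulation point of `𝒯`: a complete theory each of whose sentences has an
infinite neighbourhood in `𝒯`. -/
def AccPoint (𝒯 : Set L.Theory) (T : L.Theory) : Prop :=
  CompleteTheory T ∧ ∀ φ ∈ T, (Nbhd 𝒯 φ).Infinite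

/-- The `E`-closure of `𝒯`: `𝒯` together with all its accumulation points. -/
def ClE (𝒯 : Set L.Theory) : Set L.Theory :=
  𝒯 ∪ {T | AccPoint 𝒯 T}

lemma mem_iff_realize {T : L.Theory} (hT : CompleteTheory T)
    (M : T.ModelType) (φ : L.Sentence) : φ ∈ T ↔ M ⊨ φ := by
  constructor
  · intro h
    exact M.is_model.realize_of_mem φ h
  · intro h
    rcases hT.2 φ with h' | h'
    · exact h'
    · exact absurd h (by simpa using M.is_model.realize_of_mem _ h')

/-- If a complete theory `T` is `𝒯`-approximated, then for every `T' ∈ 𝒯`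
the theory `T` is `(𝒯 \ {T'})`-approximated. -/
theorem approximated_diff_singleton
    {L : FirstOrder.Language.{u, v}} [L.IsRelational]
    (𝒯 : Set L.Theory) (h𝒯 : ∀ S ∈ 𝒯, CompleteTheory S)
    (T : L.Theory) (hT : CompleteTheory T) (happ : Approximated 𝒯 T) :
    ∀ T' ∈ 𝒯, Approximated (𝒯 \ {T'}) T := by
  intro T' hT'
  have hT'c := h𝒯 T' hT'
  have hne : T ≠ T' := fun h => happ.1 (h ▸ hT')
  -- find ψ ∈ T \ T'
  obtain ⟨ψ, hψT, hψT'⟩ : ∃ ψ, ψ ∈ T ∧ ψ ∉ T' := by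
    by_contra h
    push_neg at h
    apply hne
    apply Set.Subset.antisymm h
    intro χ hχ
    rcases hT.2 χ with h1 | h1
    · exact h1
    · exact absurd (h _ h1) (fun hn => by
        obtain ⟨M⟩ := hT'c.1
        have := mem_iff_realize hT'c M χ |>.mp hχ
        have := mem_iff_realize hT'c M χ.not |>.mp hn
        simp_all)
  constructor
  · intro h
    exact happ.1 h.1

  · intro φ hφ
    obtain ⟨M⟩ := hT.1
    have hconj : (φ ⊓ ψ) ∈ T := by
      rw [mem_iff_realize hT M]
      have h1 := (mem_iff_realize hT M φ).mp hφ
      have h2 := (mem_iff_realize hT M ψ).mp hψT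
      simp only [Sentence.Realize, Formula.Realize, BoundedFormula.realize_inf] at *
      exact ⟨h1, h2⟩
    obtain ⟨S, hS, hconjS⟩ := happ.2 _ hconj
    obtain ⟨N⟩ := (h𝒯 S hS).1
    have hNconj := (mem_iff_realize (h𝒯 S hS) N _).mp hconjS
    simp only [Sentence.Realize, Formula.Realize, BoundedFormula.realize_inf] at hNconj
    have hφS : φ ∈ S := (mem_iff_realize (h𝒯 S hS) N φ).mpr hNconj.1
    have hψS : ψ ∈ S := (mem_iff_realize (h𝒯 S hS) N ψ).mpr hNconj.2
    exact ⟨S, ⟨hS, fun h => hψT' (h ▸ hψS)⟩, hφS⟩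

end Approx
end

section
/- Let 𝒯 be a family of complete theories and T a complete theory with T ∉ 𝒯. Then T is 𝒯-approximated if and only if T is an accumulation point of 𝒯, i.e., for every sentence φ ∈ T the set 𝒯_φ = {T' ∈ 𝒯 | φ ∈ T'} is infinite (equivalently, T ∈ Cl_E(𝒯)). -/
open FirstOrder Language Set

universe u v

namespace Approx

variable {L : FirstOrder.Language.{u, v}}

lemma mem_of_forall_models {T : L.Theory} (hT : CompleteTheory T) {σ : L.Sentence}
    (h : ∀ M : Theory.ModelType.{u, v, max u v} T, M ⊨ σ) : σ ∈ T := by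
  rcases hT.2 σ with h' | h'
  · exact h'
  · obtain ⟨M⟩ := hT.1
    have h1 := h M
    have h2 : M ⊨ σ.not := T.realize_sentence_of_mem h'
    simp only [Sentence.Realize, Formula.realize_not] at h2
    exact absurd h1 h2

lemma not_not_mem {T : L.Theory} (hT : CompleteTheory T) {σ : L.Sentence}
    (h : σ ∈ T) : σ.not ∉ T := by
  intro hn
  obtain ⟨M⟩ := hT.1
  have h1 : M ⊨ σ := T.realize_sentence_of_mem h
  have h2 : M ⊨ σ.not := T.realize_sentence_of_mem hn
  simp only [Sentence.Realize, Formula.realize_not] at h2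
  exact h2 h1

/-- Conjunction of a list of sentences together with a base sentence. -/
def conjList (φ : L.Sentence) : List L.Sentence → L.Sentence
  | [] => φ
  | ψ :: l => ψ ⊓ conjList φ l

lemma realize_conjList {M : Type*} [L.Structure M] [Nonempty M] (φ : L.Sentence)
    (l : List L.Sentence) :
    M ⊨ conjList φ l ↔ M ⊨ φ ∧ ∀ ψ ∈ l, M ⊨ ψ := by
  induction l with
  | nil => simp [conjList]
  | cons ψ l ih =>
    simp only [conjList, Sentence.Realize, Formula.realize_inf, List.mem_cons] at *
    constructor
    · rintro ⟨h1, h2⟩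
      obtain ⟨h3, h4⟩ := ih.mp h2
      exact ⟨h3, fun χ hχ => hχ.elim (fun e => e ▸ h1) (h4 χ)⟩
    · rintro ⟨h1, h2⟩
      exact ⟨h2 ψ (Or.inl rfl), ih.mpr ⟨h1, fun χ hχ => h2 χ (Or.inr hχ)⟩⟩

/-- a complete theory `T ∉ 𝒯` is `𝒯`-approximated iff for every `φ ∈ T` the
neighbourhood `𝒯_φ` is infinite, equivalently iff `T ∈ Cl_E(𝒯)`. -/
theorem approximated_iff_accPoint
    {L : FirstOrder.Language.{u, v}} [L.IsRelational]
    (𝒯 : Set L.Theory) (h𝒯 : ∀ S ∈ 𝒯, CompleteTheory S)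
    (T : L.Theory) (hT : CompleteTheory T) (hTnotin : T ∉ 𝒯) :
    (Approximated 𝒯 T ↔ ∀ φ ∈ T, (Nbhd 𝒯 φ).Infinite) ∧
    (Approximated 𝒯 T ↔ T ∈ ClE 𝒯) := by
  have main : Approximated 𝒯 T ↔ ∀ φ ∈ T, (Nbhd 𝒯 φ).Infinite := by
    constructor
    · intro hA φ hφ
      by_contra hfin
      rw [Set.not_infinite] at hfin
      -- separate T from each member of the neighbourhood
      have hsep : ∀ S : L.Theory, ∃ ψ : L.Sentence,
          S ∈ Nbhd 𝒯 φ → ψ ∈ T ∧ ψ ∉ S := by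
        intro S
        by_cases hS : S ∈ Nbhd 𝒯 φ
        · have hScomp : CompleteTheory S := h𝒯 S hS.1
          have hSne : S ≠ T := fun h => hTnotin (h ▸ hS.1)
          have hne : ¬ ∀ χ : L.Sentence, χ ∈ S ↔ χ ∈ T := fun h => hSne (Set.ext h)
          push_neg at hne
          obtain ⟨χ, hχ⟩ := hne
          rcases hχ with ⟨h1, h2⟩ | ⟨h2, h1⟩
          · -- χ ∈ S, χ ∉ T : take ψ = χ.not
            refine ⟨χ.not, fun _ => ⟨(hT.2 χ).resolve_left h2, not_not_mem hScomp h1⟩⟩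
          · -- χ ∈ T, χ ∉ S
            exact ⟨χ, fun _ => ⟨h1, h2⟩⟩
        · exact ⟨φ, fun h => absurd h hS⟩
      choose g hg using hsep
      set l : List L.Theory := hfin.toFinset.toList with hl
      have hmeml : ∀ S, S ∈ l ↔ S ∈ Nbhd 𝒯 φ := by
        intro S; rw [hl, Finset.mem_toList, Set.Finite.mem_toFinset]
      -- the conjunction sentence
      set χ : L.Sentence := conjList φ (l.map g) with hχdef
      have hχT : χ ∈ T := by
        apply mem_of_forall_models hT
        intro M
        rw [hχdef, realize_conjList]
        refine ⟨T.realize_sentence_of_mem hφ, ?_⟩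
        intro ψ hψ
        obtain ⟨S, hSl, rfl⟩ := List.mem_map.mp hψ
        exact T.realize_sentence_of_mem ((hg S ((hmeml S).mp hSl)).1)
      obtain ⟨T', hT'𝒯, hχT'⟩ := hA.2 χ hχT
      have hT'comp : CompleteTheory T' := h𝒯 T' hT'𝒯
      -- every model of T' realizes χ, hence φ and each g S
      have hmod : ∀ M : Theory.ModelType.{u, v, max u v} T',
          M ⊨ φ ∧ ∀ ψ ∈ l.map g, (M : Type (max u v)) ⊨ ψ := by
        intro M
        have : (M : Type (max u v)) ⊨ χ := T'.realize_sentence_of_mem hχT'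
        rw [hχdef, realize_conjList] at this
        exact this
      have hφT' : φ ∈ T' := mem_of_forall_models hT'comp fun M => (hmod M).1
      have hT'nb : T' ∈ Nbhd 𝒯 φ := ⟨hT'𝒯, hφT'⟩
      have hT'l : T' ∈ l := (hmeml T').mpr hT'nb
      have hgT' : g T' ∈ T' := by
        apply mem_of_forall_models hT'comp
        intro M
        exact (hmod M).2 (g T') (List.mem_map.mpr ⟨T', hT'l, rfl⟩)
      exact (hg T' hT'nb).2 hgT'
    · intro h
      refine ⟨hTnotin, fun φ hφ => ?_⟩
      obtain ⟨T', hT'⟩ := (h φ hφ).nonempty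
      exact ⟨T', hT'.1, hT'.2⟩
  refine ⟨main, main.trans ?_⟩
  constructor
  · intro h
    exact Or.inr ⟨hT, h⟩
  · rintro (h | h)
    · exact absurd h hTnotin
    · exact h.2

end Approx
end

section
/- For any family 𝒯 of complete theories, there exists a 𝒯-approximated complete theory if and only if 𝒯 is not E-closed, i.e., if and only if some accumulation point of 𝒯 does not belong to 𝒯. -/
/-!
Complete theories are the points of a Stone space whose basic clopen sets are the sets of
theories containing a fixed sentence; `𝒯_φ` is such a neighbourhood intersected with `𝒯`, and a
`𝒯`-approximated theory is a point of the closure of `𝒯` outside `𝒯`. Since this space is T₁,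
a finite `𝒯_φ` can be cut away by one more sentence `χ ∈ T`, and then `φ ∧ χ` would be a sentence
of `T` lying in no member of `𝒯`.
-/

open FirstOrder Language Set

universe u v

namespace Approx

variable {L : FirstOrder.Language.{u, v}}

namespace CompleteTheory

variable {S T : L.Theory}

theorem mem_iff_realize (hT : CompleteTheory T) (M : Type*) [L.Structure M] [M ⊨ T]
    (φ : L.Sentence) : φ ∈ T ↔ M ⊨ φ := by
  refine ⟨T.realize_sentence_of_mem, fun hφ => (hT.2 φ).resolve_right fun hnot => ?_⟩
  exact (Sentence.realize_not M).1 (T.realize_sentence_of_mem hnot) hφ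

theorem inf_mem_iff (hT : CompleteTheory T) (φ ψ : L.Sentence) :
    φ ⊓ ψ ∈ T ↔ φ ∈ T ∧ ψ ∈ T := by
  obtain ⟨M⟩ := hT.1
  simp only [hT.mem_iff_realize M, Sentence.realize_inf]

theorem iInf_mem_iff {β : Type*} [Finite β] (hT : CompleteTheory T) (f : β → L.Sentence) :
    Formula.iInf f ∈ T ↔ ∀ b, f b ∈ T := by
  obtain ⟨M⟩ := hT.1
  simp only [hT.mem_iff_realize M, Sentence.Realize, Formula.realize_iInf]

theorem eq_of_subset (hT : CompleteTheory T) (hS : S.IsSatisfiable) (h : T ⊆ S) : T = S := by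
  refine h.antisymm fun φ hφS => (hT.2 φ).resolve_right fun hnot => ?_
  obtain ⟨M⟩ := hS
  exact (Sentence.realize_not M).1 (S.realize_sentence_of_mem (h hnot))
    (S.realize_sentence_of_mem hφS)

theorem exists_mem_notMem_of_ne (hT : CompleteTheory T) (hS : S.IsSatisfiable) (h : T ≠ S) :
    ∃ ψ ∈ T, ψ ∉ S := by
  by_contra! hsub
  exact h (hT.eq_of_subset hS hsub)

-- The T₁ property of the Stone space of complete theories.
theorem exists_mem_forall_notMem_of_finite (hT : CompleteTheory T) {F : Set L.Theory}
    (hF : F.Finite) (hF_complete : ∀ S ∈ F, CompleteTheory S) (hTF : T ∉ F) :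
    ∃ χ ∈ T, ∀ S ∈ F, χ ∉ S := by
  have : Finite F := hF.to_subtype
  have hsep (S : F) : ∃ ψ ∈ T, ψ ∉ (S : L.Theory) :=
    hT.exists_mem_notMem_of_ne (hF_complete S S.2).1 fun h => hTF (h ▸ S.2)
  choose ψ hψT hψS using hsep
  refine ⟨Formula.iInf ψ, (hT.iInf_mem_iff ψ).2 hψT, fun S hS hχS => ?_⟩
  exact hψS ⟨S, hS⟩ (((hF_complete S hS).iInf_mem_iff ψ).1 hχS ⟨S, hS⟩)

end CompleteTheory

variable {𝒯 : Set L.Theory} {T : L.Theory}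

theorem Approximated.accPoint (h𝒯 : ∀ S ∈ 𝒯, CompleteTheory S) (hT : CompleteTheory T)
    (happ : Approximated 𝒯 T) : AccPoint 𝒯 T := by
  refine ⟨hT, fun φ hφ hfin => ?_⟩
  obtain ⟨χ, hχT, hχ⟩ := hT.exists_mem_forall_notMem_of_finite hfin
    (fun S hS => h𝒯 S hS.1) fun hTφ => happ.1 hTφ.1
  obtain ⟨S, hS𝒯, hS⟩ := happ.2 _ ((hT.inf_mem_iff φ χ).2 ⟨hφ, hχT⟩)
  obtain ⟨hφS, hχS⟩ := ((h𝒯 S hS𝒯).inf_mem_iff φ χ).1 hS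
  exact hχ S ⟨hS𝒯, hφS⟩ hχS

theorem AccPoint.approximated (hacc : AccPoint 𝒯 T) (hT : T ∉ 𝒯) : Approximated 𝒯 T :=
  ⟨hT, fun φ hφ => (hacc.2 φ hφ).nonempty⟩

theorem clE_ne_of_accPoint (hacc : AccPoint 𝒯 T) (hT : T ∉ 𝒯) : ClE 𝒯 ≠ 𝒯 :=
  fun h => hT (h ▸ Or.inr hacc)

theorem exists_approximated_iff_not_eClosed_general
    {L : FirstOrder.Language.{u, v}}
    (𝒯 : Set L.Theory) (h𝒯 : ∀ S ∈ 𝒯, CompleteTheory S) :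
    (∃ T : L.Theory, CompleteTheory T ∧ Approximated 𝒯 T) ↔
      (ClE 𝒯 ≠ 𝒯 ∧ ∃ T : L.Theory, AccPoint 𝒯 T ∧ T ∉ 𝒯) := by
  constructor
  · rintro ⟨T, hT, happ⟩
    have hacc := happ.accPoint h𝒯 hT
    exact ⟨clE_ne_of_accPoint hacc happ.1, T, hacc, happ.1⟩
  · rintro ⟨-, T, hacc, hT⟩
    exact ⟨T, hacc.1, hacc.approximated hT⟩

/-- there exists a `𝒯`-approximated complete theory iff `𝒯` is not `E`-closed,
i.e. iff some accumulation point of `𝒯` does not belong to `𝒯`. -/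
theorem exists_approximated_iff_not_eClosed
    {L : FirstOrder.Language.{u, v}} [L.IsRelational]
    (𝒯 : Set L.Theory) (h𝒯 : ∀ S ∈ 𝒯, CompleteTheory S) :
    (∃ T : L.Theory, CompleteTheory T ∧ Approximated 𝒯 T) ↔
      (ClE 𝒯 ≠ 𝒯 ∧ ∃ T : L.Theory, AccPoint 𝒯 T ∧ T ∉ 𝒯) :=
  exists_approximated_iff_not_eClosed_general 𝒯 h𝒯

end Approx
end

section
/- Let 𝒯_fin be the family of all complete L-theories having a finite model, and let T be a complete L-theory whose models are infinite (so T ∉ 𝒯_fin). Then the following are equivalent: (1) T is pseudo-finite, i.e., every sentence φ ∈ T has a finite model; (2) T is 𝒯_fin-approximated; (3) T belongs to Cl_E(𝒯_fin) \ 𝒯_fin. -/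
open FirstOrder Language Set

universe u v

namespace Approx

variable {L : FirstOrder.Language.{u, v}}

/-- The family of all complete theories having a finite model. -/
def TFin (L : FirstOrder.Language.{u, v}) : Set L.Theory :=
  {T | CompleteTheory T ∧ ∃ M : Theory.ModelType.{u, v, max u v} T, Finite M}

/-- If `T` is complete and some model of `T` realizes `φ`, then `φ ∈ T`. -/
lemma mem_of_realize {T : L.Theory} (hT : CompleteTheory T)
    (M : Theory.ModelType.{u, v, max u v} T) {φ : L.Sentence} (h : M ⊨ φ) : φ ∈ T := by
  rcases hT.2 φ with h' | h'
  · exact h'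
  · exact absurd h ((Sentence.realize_not _).1 (T.realize_sentence_of_mem (M := M) h'))

/-- The complete theory of a structure is complete. -/
lemma completeTheory_complete (M : Type (max u v)) [L.Structure M] [Nonempty M] :
    CompleteTheory (L.completeTheory M) := by
  refine ⟨⟨Theory.ModelType.of _ M⟩, fun φ => ?_⟩
  by_cases h : M ⊨ φ
  · exact Or.inl (mem_completeTheory.2 h)
  · exact Or.inr (mem_completeTheory.2 ((Sentence.realize_not _).2 h))

/-- for a complete theory `T` all of whose models are infinite, the following are
equivalent: (1) `T` is pseudo-finite (every sentence of `T` has a finite model);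
(2) `T` is `𝒯_fin`-approximated; (3) `T ∈ Cl_E(𝒯_fin) \ 𝒯_fin`. -/
theorem pseudoFinite_tfae
    {L : FirstOrder.Language.{u, v}} [L.IsRelational]
    (T : L.Theory) (hT : CompleteTheory T)
    (hinf : ∀ M : Theory.ModelType.{u, v, max u v} T, Infinite M) :
    List.TFAE
      [ ∀ φ ∈ T, ∃ M : Theory.ModelType.{u, v, max u v} ({φ} : L.Theory), Finite M,
        Approximated (TFin L) T,
        T ∈ ClE (TFin L) \ TFin L ] := by
  have hTnotin : T ∉ TFin L := by
    rintro ⟨-, M, hM⟩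
    exact (hinf M).not_finite hM
  -- every sentence `cardGe n` is in `T`
  obtain ⟨M0⟩ := hT.1
  have hcard : ∀ n : ℕ, Sentence.cardGe L n ∈ T := by
    intro n
    refine mem_of_realize hT M0 ?_
    have : (M0 : Type (max u v)) ⊨ Sentence.cardGe L n := by
      rw [Sentence.realize_cardGe]
      exact le_trans (Cardinal.nat_lt_aleph0 n).le (Cardinal.aleph0_le_mk M0)
    exact this
  tfae_have 1 → 2 := by
    intro h1
    refine ⟨hTnotin, fun φ hφ => ?_⟩
    obtain ⟨M, hM⟩ := h1 φ hφ
    refine ⟨L.completeTheory M, ⟨completeTheory_complete M,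
      ⟨Theory.ModelType.of _ M, hM⟩⟩, ?_⟩
    exact mem_completeTheory.2 (Theory.realize_sentence_of_mem _ (mem_singleton φ))
  tfae_have 2 → 3 := by
    rintro ⟨-, h2⟩
    refine ⟨Or.inr ⟨hT, fun φ hφ => ?_⟩, hTnotin⟩
    -- choose, for each n, a theory in `TFin L` containing `φ ⊓ cardGe n`
    have key : ∀ n : ℕ, ∃ T' ∈ Nbhd (TFin L) φ, Sentence.cardGe L n ∈ T' := by
      intro n
      have hmem : (φ ⊓ Sentence.cardGe L n) ∈ T := by
        refine mem_of_realize hT M0 (Formula.realize_inf.2 ⟨?_, ?_⟩)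
        · exact T.realize_sentence_of_mem hφ
        · have : (M0 : Type (max u v)) ⊨ Sentence.cardGe L n := by
            rw [Sentence.realize_cardGe]
            exact le_trans (Cardinal.nat_lt_aleph0 n).le (Cardinal.aleph0_le_mk M0)
          exact this
      obtain ⟨T', hT'fin, hmem'⟩ := h2 _ hmem
      obtain ⟨hT'c, M', -⟩ := id hT'fin
      have hreal : M' ⊨ (φ ⊓ Sentence.cardGe L n) := T'.realize_sentence_of_mem hmem'
      simp only [Sentence.Realize, Formula.realize_inf] at hreal
      exact ⟨T', ⟨hT'fin, mem_of_realize hT'c M' hreal.1⟩, mem_of_realize hT'c M' hreal.2⟩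
    by_contra hfin
    rw [Set.not_infinite] at hfin
    have : Finite (Nbhd (TFin L) φ) := hfin.to_subtype
    choose f hf1 hf2 using key
    obtain ⟨y, hfib⟩ :=
      Finite.exists_infinite_fiber (fun n => (⟨f n, hf1 n⟩ : Nbhd (TFin L) φ))
    obtain ⟨hT''fin, -⟩ := id y.2
    obtain ⟨hT''c, M'', hM''fin⟩ := id hT''fin
    obtain ⟨k, hk⟩ := Cardinal.lt_aleph0.1 (Cardinal.lt_aleph0_of_finite M'')
    obtain ⟨n, hn, hkn⟩ := Set.Infinite.exists_gt (Set.infinite_coe_iff.1 hfib) k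
    have hfn : f n = (y : L.Theory) :=
      congrArg Subtype.val (Set.mem_singleton_iff.1 (Set.mem_preimage.1 hn))
    have : M'' ⊨ Sentence.cardGe L n :=
      (y : L.Theory).realize_sentence_of_mem (hfn ▸ hf2 n)
    rw [Sentence.realize_cardGe, hk, Nat.cast_le] at this
    omega
  tfae_have 3 → 1 := by
    rintro ⟨h3, hnot⟩ φ hφ
    have hacc : AccPoint (TFin L) T := h3.resolve_left hnot
    obtain ⟨T', hT'⟩ := (hacc.2 φ hφ).nonempty
    obtain ⟨⟨hT'c, M', hM'fin⟩, hφT'⟩ := hT'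
    have : M' ⊨ φ := T'.realize_sentence_of_mem hφT'
    have : M' ⊨ ({φ} : L.Theory) := Theory.model_singleton_iff.2 this
    exact ⟨Theory.ModelType.of _ M', hM'fin⟩
  tfae_finish

end Approx
end

section
/- Let L be a language all of whose relation symbols are unary (and with no function or constant symbols), and let T be a complete L-theory whose models are infinite. Then T is approximated by the family of complete L-theories T' such that T' has a finite model and all but finitely many relation symbols of L are interpreted in models of T' as either the empty set or the whole universe; in particular, T is pseudo-finite (every sentence of T has a finite model). -/
open FirstOrder Language Set

universe u v

namespace Approx

variable {L : FirstOrder.Language.{u, v}}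

open FirstOrder.Language.BoundedFormula in
/-- The sentence asserting that the unary relation `r` holds of every element. -/
def allSentence {L : FirstOrder.Language.{u, v}} (r : L.Relations 1) : L.Sentence :=
  ∀' (r.boundedFormula₁ (&0))

open FirstOrder.Language.BoundedFormula in
/-- The sentence asserting that the unary relation `r` holds of no element. -/
def emptySentence {L : FirstOrder.Language.{u, v}} (r : L.Relations 1) : L.Sentence :=
  ∀' (∼(r.boundedFormula₁ (&0)))

/-! Fix `φ ∈ T`, a model `M` of `T`, the set `S` of relation symbols of `φ`, and `q` the quantifier
depth of `φ` plus one. Keep, for each of the finitely many `S`-types, all of its realisations in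
`M` if there are finitely many, and `q` of them otherwise; on the resulting finite set `N` interpret
the symbols of `S` as in `M` and all others as empty. Swapping two elements of the same `S`-type is
an `S`-automorphism of `M`, so every quantifier of `φ` evaluated in `M` with at most `q - 1`
parameters from `N` can be witnessed inside `N`, and hence `N ⊨ φ`. The complete theory of `N`
contains `φ`, has a finite model and makes every symbol outside `S` empty, while `T` itself is not
of this kind because its models are infinite. -/

universe w w'

open Structure

def relSymbols {α : Type*} : ∀ {n}, L.BoundedFormula α n → Set (Σ k, L.Relations k)
  | _, .falsum => ∅
  | _, .equal _ _ => ∅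
  | _, .rel R _ => {⟨_, R⟩}
  | _, .imp f g => relSymbols f ∪ relSymbols g
  | _, .all f => relSymbols f

theorem relSymbols_finite {α : Type*} :
    ∀ {n} (ψ : L.BoundedFormula α n), (relSymbols ψ).Finite
  | _, .falsum => finite_empty
  | _, .equal _ _ => finite_empty
  | _, .rel _ _ => finite_singleton _
  | _, .imp f g => (relSymbols_finite f).union (relSymbols_finite g)
  | _, .all f => relSymbols_finite f

def quantifierDepth {α : Type*} : ∀ {n}, L.BoundedFormula α n → ℕ
  | _, .imp f g => max (quantifierDepth f) (quantifierDepth g)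
  | _, .all f => quantifierDepth f + 1
  | _, _ => 0

def PreservesRelsOn {M : Type w} {N : Type w'} [L.Structure M] [L.Structure N]
    (S : Set (Σ k, L.Relations k)) (f : M → N) : Prop :=
  ∀ ⦃k⦄ (R : L.Relations k), ⟨k, R⟩ ∈ S → ∀ xs : Fin k → M, RelMap R (f ∘ xs) ↔ RelMap R xs

section Relational

variable [L.IsRelational] {α : Type*} {M : Type w} {N : Type w'} [L.Structure M] [L.Structure N]
  {S : Set (Σ k, L.Relations k)} {f : M → N}

theorem Term.realize_comp (t : L.Term α) (f : M → N) (v : α → M) :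
    t.realize (f ∘ v) = f (t.realize v) := by
  cases t with
  | var a => rfl
  | func g _ => exact isEmptyElim g

theorem realize_equal_comp (hf : f.Injective) {n : ℕ} {v : α → M} {xs : Fin n → M}
    (t₁ t₂ : L.Term (α ⊕ Fin n)) :
    (t₁.bdEqual t₂).Realize (f ∘ v) (f ∘ xs) ↔ (t₁.bdEqual t₂).Realize v xs := by
  simp only [BoundedFormula.realize_bdEqual, ← Sum.comp_elim, Term.realize_comp, hf.eq_iff]

theorem realize_rel_comp (hf : PreservesRelsOn S f) {n : ℕ} {v : α → M} {xs : Fin n → M}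
    {k : ℕ} {R : L.Relations k} (hR : ⟨k, R⟩ ∈ S) (ts : Fin k → L.Term (α ⊕ Fin n)) :
    (R.boundedFormula ts).Realize (f ∘ v) (f ∘ xs) ↔ (R.boundedFormula ts).Realize v xs := by
  simp only [BoundedFormula.realize_rel, ← Sum.comp_elim, Term.realize_comp]
  exact hf R hR _

theorem realize_comp_equiv_iff (σ : M ≃ N) (hσ : PreservesRelsOn S σ) {n : ℕ}
    (ψ : L.BoundedFormula α n) (hψ : relSymbols ψ ⊆ S) (v : α → M) (xs : Fin n → M) :
    ψ.Realize (σ ∘ v) (σ ∘ xs) ↔ ψ.Realize v xs := by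
  induction ψ with
  | falsum => rfl
  | equal t₁ t₂ => exact realize_equal_comp σ.injective t₁ t₂
  | rel R ts => exact realize_rel_comp hσ (hψ rfl) ts
  | imp g₁ g₂ ih₁ ih₂ =>
    simp only [BoundedFormula.realize_imp, ih₁ (subset_union_left.trans hψ),
      ih₂ (subset_union_right.trans hψ)]
  | all g ih =>
    simp only [BoundedFormula.realize_all, ← Fin.comp_snoc, ih hψ,
      ← σ.forall_congr_right (q := fun b => g.Realize _ (Fin.snoc _ b))]

/-- The `∀` step moves a witness into the range of `f` by an `S`-automorphism fixing the
parameters. -/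
theorem realize_comp_iff_of_exists_equiv {q : ℕ} (hf : f.Injective) (hrel : PreservesRelsOn S f)
    (hext : ∀ m < q, ∀ (ys : Fin m → M) (b : N),
      ∃ σ : N ≃ N, PreservesRelsOn S σ ∧ σ b ∈ range f ∧ ∀ i, σ (f (ys i)) = f (ys i))
    {n : ℕ} (ψ : L.BoundedFormula Empty n) (hψ : relSymbols ψ ⊆ S)
    (hq : quantifierDepth ψ + n ≤ q) (v : Empty → M) (xs : Fin n → M) :
    ψ.Realize (f ∘ v) (f ∘ xs) ↔ ψ.Realize v xs := by
  induction ψ with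
  | falsum => rfl
  | equal t₁ t₂ => exact realize_equal_comp hf t₁ t₂
  | rel R ts => exact realize_rel_comp hrel (hψ rfl) ts
  | imp g₁ g₂ ih₁ ih₂ =>
    rw [quantifierDepth, ← max_add_add_right, max_le_iff] at hq
    simp only [BoundedFormula.realize_imp, ih₁ (subset_union_left.trans hψ) hq.1,
      ih₂ (subset_union_right.trans hψ) hq.2]
  | @all m g ih =>
    have hq' : quantifierDepth g + (m + 1) ≤ q := by simp only [quantifierDepth] at hq; omega
    simp only [BoundedFormula.realize_all]
    refine ⟨fun h a => (ih hψ hq' _).1 (by rw [Fin.comp_snoc]; exact h (f a)), fun h b => ?_⟩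
    obtain ⟨σ, hσ, ⟨a, ha⟩, hfix⟩ := hext m (by omega) xs b
    have hσv : σ ∘ f ∘ v = f ∘ v := funext fun e => e.elim
    have hσxs : σ ∘ Fin.snoc (f ∘ xs) b = Fin.snoc (f ∘ xs) (f a) := by
      rw [Fin.comp_snoc, ha]
      congr 1
      exact funext hfix
    rw [← realize_comp_equiv_iff σ hσ g hψ, hσv, hσxs, ← Fin.comp_snoc, ih hψ hq']
    exact h a

end Relational

theorem exists_finite_forall_le_ncard {M ι : Type*} [Finite ι] (τ : M → ι) (q : ℕ) :
    ∃ N : Set M, N.Finite ∧ ∀ b ∉ N, q ≤ {x ∈ N | τ x = τ b}.ncard := by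
  have hsample : ∀ i, ∃ t ⊆ τ ⁻¹' {i}, t.Finite ∧ (τ ⁻¹' {i} ⊆ t ∨ q ≤ t.ncard) := by
    intro i
    by_cases hfin : (τ ⁻¹' {i}).Finite
    · exact ⟨_, subset_rfl, hfin, .inl subset_rfl⟩
    · obtain ⟨t, ht, htfin, hcard⟩ := Infinite.exists_subset_ncard_eq hfin q
      exact ⟨t, ht, htfin, .inr hcard.ge⟩
  choose t ht htfin hcover using hsample
  refine ⟨⋃ i, t i, finite_iUnion htfin, fun b hb => ?_⟩
  have hbt : b ∉ t (τ b) := fun h => hb (mem_iUnion_of_mem _ h)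
  refine ((hcover (τ b)).resolve_left fun h => hbt (h rfl)).trans
    (ncard_le_ncard (fun x hx => ⟨mem_iUnion_of_mem _ hx, ht _ hx⟩) ?_)
  exact (finite_iUnion htfin).subset (sep_subset _ _)

section Unary

variable {M : Type w} [L.Structure M] {S : Set (Σ k, L.Relations k)}

/-- Evaluates each `R ∈ S` at the constant tuple `(x, …, x)`; in a unary language this is the
`S`-type of `x`. -/
def relType (S : Set (Σ k, L.Relations k)) (x : M) : S → Prop :=
  fun R => RelMap R.1.2 fun _ => x

variable (hunary : ∀ n, n ≠ 1 → IsEmpty (L.Relations n))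
include hunary

theorem preservesRelsOn_swap [DecidableEq M] {x y : M} (hxy : relType S x = relType S y) :
    PreservesRelsOn S (Equiv.swap x y) := by
  intro k R hR zs
  obtain rfl : k = 1 := by by_contra hk; exact (hunary k hk).false R
  have hzs : zs = fun _ => zs 0 := funext fun i => congrArg zs (Subsingleton.elim i 0)
  have hxy' : RelMap R (fun _ => x) ↔ RelMap R (fun _ => y) := iff_of_eq (congrFun hxy ⟨_, hR⟩)
  rw [hzs]
  change RelMap R (fun _ => Equiv.swap x y (zs 0)) ↔ _
  rcases eq_or_ne (zs 0) x with hx | hx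
  · rw [hx, Equiv.swap_apply_left]; exact hxy'.symm
  rcases eq_or_ne (zs 0) y with hy | hy
  · rw [hy, Equiv.swap_apply_right]; exact hxy'
  rw [Equiv.swap_apply_of_ne_of_ne hx hy]

theorem exists_preservesRelsOn_equiv_apply_mem {N : Set M} {q : ℕ}
    (hN : ∀ b ∉ N, q ≤ {x ∈ N | relType S x = relType S b}.ncard) {m : ℕ} (hm : m < q)
    (ys : Fin m → N) (b : M) :
    ∃ σ : M ≃ M, PreservesRelsOn S σ ∧ σ b ∈ range (Subtype.val : N → M) ∧
      ∀ i, σ (ys i) = ys i := by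
  classical
  by_cases hb : b ∈ N
  · exact ⟨Equiv.refl M, fun _ _ _ _ => Iff.rfl, ⟨⟨b, hb⟩, rfl⟩, fun _ => rfl⟩
  have hlt : (range fun i => (ys i : M)).ncard < {x ∈ N | relType S x = relType S b}.ncard :=
    calc _ ≤ m := by simpa using ncard_image_le (f := fun i => (ys i : M)) (s := univ)
      _ < q := hm
      _ ≤ _ := hN b hb
  obtain ⟨c, ⟨hcN, hcb⟩, hcys⟩ := exists_mem_notMem_of_ncard_lt_ncard hlt
  refine ⟨Equiv.swap b c, preservesRelsOn_swap hunary hcb.symm,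
    ⟨⟨c, hcN⟩, (Equiv.swap_apply_left b c).symm⟩, fun i => Equiv.swap_apply_of_ne_of_ne ?_ ?_⟩
  · exact fun h => hb (h ▸ (ys i).2)
  · exact fun h => hcys ⟨i, h⟩

end Unary

abbrev restrictStructure [L.IsRelational] {M : Type w} [L.Structure M]
    (S : Set (Σ k, L.Relations k)) (N : Set M) : L.Structure N where
  RelMap R xs := ⟨_, R⟩ ∈ S ∧ RelMap R (Subtype.val ∘ xs)

theorem exists_finite_model_of_isSatisfiable [L.IsRelational]
    (hunary : ∀ n, n ≠ 1 → IsEmpty (L.Relations n)) {φ : L.Sentence}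
    (h : ({φ} : L.Theory).IsSatisfiable) :
    ∃ N : Theory.ModelType.{u, v, max u v} ({φ} : L.Theory), Finite N ∧
      {r : L.Relations 1 | ¬ N ⊨ emptySentence r}.Finite := by
  obtain ⟨M⟩ := h
  set S := relSymbols φ
  have : Finite S := (relSymbols_finite φ).to_subtype
  obtain ⟨N, hNfin, hN⟩ :=
    exists_finite_forall_le_ncard (relType S : M → S → Prop) (quantifierDepth φ + 1)
  let := restrictStructure S N
  have hext := fun m (hm : m < quantifierDepth φ + 1) =>
    exists_preservesRelsOn_equiv_apply_mem hunary hN hm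
  have hφ : N ⊨ φ := by
    have := realize_comp_iff_of_exists_equiv Subtype.val_injective
      (fun _ R hR _ => (and_iff_right hR).symm) hext φ subset_rfl (by omega) default default
    rw [Unique.eq_default (Subtype.val ∘ _), Unique.eq_default (Subtype.val ∘ _)] at this
    exact this.1 (Theory.realize_sentence_of_mem {φ} (mem_singleton φ))
  obtain ⟨-, -, ⟨x, -⟩, -⟩ := hext 0 (by omega) Fin.elim0 (Classical.arbitrary M)
  have : Nonempty N := ⟨x⟩
  have : N ⊨ ({φ} : L.Theory) := Theory.model_singleton_iff.2 hφ
  refine ⟨Theory.ModelType.of _ N, hNfin.to_subtype,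
    ((relSymbols_finite φ).preimage sigma_mk_injective.injOn).subset fun r hr => ?_⟩
  by_contra hrS
  refine hr ?_
  simp only [emptySentence, Sentence.Realize, Formula.Realize, BoundedFormula.realize_all,
    BoundedFormula.realize_not, BoundedFormula.realize_rel₁]
  exact fun _ hx => hrS hx.1

/-- a complete theory `T` of a purely unary relational language, all of whose
models are infinite, is approximated by the family of complete theories having a finite model
in which all but finitely many relation symbols are empty or complete; in particular `T`
is pseudo-finite. -/
theorem unary_approximated_by_finite
    {L : FirstOrder.Language.{u, v}} [L.IsRelational]
    (hunary : ∀ n, n ≠ 1 → IsEmpty (L.Relations n))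
    (T : L.Theory) (hT : CompleteTheory T)
    (hinf : ∀ M : Theory.ModelType.{u, v, max u v} T, Infinite M) :
    Approximated
      {T' : L.Theory | CompleteTheory T' ∧
        (∃ M : Theory.ModelType.{u, v, max u v} T', Finite M) ∧
        {r : L.Relations 1 | allSentence r ∉ T' ∧ emptySentence r ∉ T'}.Finite} T ∧
    ∀ φ ∈ T, ∃ M : Theory.ModelType.{u, v, max u v} ({φ} : L.Theory), Finite M := by
  have hfinite (φ : L.Sentence) (hφ : φ ∈ T) :=
    exists_finite_model_of_isSatisfiable hunary (hT.1.mono (singleton_subset_iff.2 hφ))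
  refine ⟨⟨?_, fun φ hφ => ?_⟩, fun φ hφ => ?_⟩
  · rintro ⟨-, ⟨M, hM⟩, -⟩
    exact not_finite_iff_infinite.2 (hinf M) hM
  · obtain ⟨N, hN, hrels⟩ := hfinite φ hφ
    refine ⟨L.completeTheory N, ⟨⟨completeTheory.isSatisfiable L N,
      completeTheory.mem_or_not_mem L N⟩, ⟨Theory.ModelType.of _ N, hN⟩,
      hrels.subset fun r hr => hr.2⟩, Theory.realize_sentence_of_mem {φ} (mem_singleton φ)⟩
  · obtain ⟨N, hN, -⟩ := hfinite φ hφ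
    exact ⟨N, hN⟩

end Approx
end

section
/- Let L be a language all of whose relation symbols are unary (and with no function or constant symbols), and let T be a complete L-theory having a finite model. Then T is approximable (i.e., T is 𝒯-approximated for some family 𝒯 of complete L-theories) if and only if L has infinitely many relation symbols. -/
open FirstOrder Language Set

universe u v

namespace Approx

variable {L : FirstOrder.Language.{u, v}}

/-!
If `L` has only finitely many relation symbols, a finite structure `M` is determined up to
isomorphism by a single sentence: there is an enumeration of the universe by `M` satisfying the
atomic diagram of `M`. Every complete theory containing that sentence is therefore `Th(M)`, so
`Th(M)` cannot be approximated.

If `L` has infinitely many relation symbols, let `M_R` be `M` with `R` reinterpreted as empty when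
it is nonempty in `M` and as full otherwise. The sentence `∃ x, R x` separates `Th(M_R)` from
`Th(M)`, but a sentence mentions only finitely many symbols, so every sentence of `Th(M)` holds in
all but finitely many `M_R`: the theories `Th(M_R)` approximate `Th(M)`.
-/

theorem CompleteTheory.eq_completeTheory {T : L.Theory} (hT : CompleteTheory T) (M : Type*)
    [L.Structure M] [M ⊨ T] [Nonempty M] : T = L.completeTheory M :=
  have hmax : T.IsMaximal := hT
  (Set.ext hmax.mem_iff_models).trans (hmax.isComplete.eq_complete_theory M)

theorem completeTheory_completeTheory (M : Type*) [L.Structure M] [Nonempty M] :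
    CompleteTheory (L.completeTheory M) :=
  completeTheory.isMaximal L M

section CharacteristicSentence

open Classical in
noncomputable def literal {α : Type*} {n : ℕ} (φ : L.BoundedFormula α n) (p : Prop) :
    L.BoundedFormula α n :=
  if p then φ else ∼φ

theorem realize_literal {M α : Type*} [L.Structure M] {n : ℕ} {φ : L.BoundedFormula α n}
    {p : Prop} {v : α → M} {xs : Fin n → M} :
    (literal φ p).Realize v xs ↔ (φ.Realize v xs ↔ p) := by
  unfold literal
  split_ifs with hp <;> simp [hp]

variable (M : Type*) [L.Structure M] [Finite M] [Finite (Σ n, L.Relations n)]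

/-- `∃ (x_m)_{m : M}`, pairwise distinct, exhausting the universe, and satisfying the atomic
diagram of `M`. -/
noncomputable def characteristicSentence : L.Sentence :=
  Formula.iExs M <|
    (BoundedFormula.iInf fun p : M × M =>
      literal ((var (Sum.inl (Sum.inr p.1))).bdEqual (var (Sum.inl (Sum.inr p.2)))) (p.1 = p.2)) ⊓
    (BoundedFormula.iSup fun m : M =>
      (var (Sum.inl (Sum.inr m))).bdEqual (var (Sum.inr (Fin.last 0)))).all ⊓
    BoundedFormula.iInf fun R : Σ R : Σ n, L.Relations n, Fin R.1 → M =>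
      literal (R.1.2.boundedFormula fun i => var (Sum.inl (Sum.inr (R.2 i))))
        (Structure.RelMap R.1.2 R.2)

theorem realize_characteristicSentence_iff [L.IsRelational] {N : Type*} [L.Structure N] :
    N ⊨ characteristicSentence (L := L) M ↔ Nonempty (M ≃[L] N) := by
  rw [characteristicSentence, Sentence.Realize, Formula.Realize, BoundedFormula.realize_iExs]
  simp only [Formula.Realize, BoundedFormula.realize_inf, BoundedFormula.realize_iInf,
    realize_literal, BoundedFormula.realize_bdEqual, Term.realize_var, Sum.elim_inl, Sum.elim_inr,
    BoundedFormula.realize_all, BoundedFormula.realize_iSup, Fin.snoc_last,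
    BoundedFormula.realize_rel]
  constructor
  · rintro ⟨i, ⟨hinj, hsurj⟩, hrel⟩
    exact ⟨{ toEquiv := .ofBijective i ⟨fun a b h => (hinj (a, b)).1 h, hsurj⟩
             map_fun' := fun f => isEmptyElim f
             map_rel' := fun r x => hrel ⟨⟨_, r⟩, x⟩ }⟩
  · rintro ⟨e⟩
    exact ⟨e, ⟨fun p => e.injective.eq_iff, e.surjective⟩, fun R => e.map_rel R.1.2 R.2⟩

theorem realize_characteristicSentence [L.IsRelational] : M ⊨ characteristicSentence (L := L) M :=
  (realize_characteristicSentence_iff M).2 ⟨.refl L M⟩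

end CharacteristicSentence

theorem CompleteTheory.eq_completeTheory_of_characteristicSentence_mem [L.IsRelational]
    [Finite (Σ n, L.Relations n)] {M : Type*} [L.Structure M] [Finite M] {T : L.Theory}
    (hT : CompleteTheory T) (h : characteristicSentence M ∈ T) : T = L.completeTheory M := by
  obtain ⟨N⟩ := hT.1
  obtain ⟨e⟩ := (realize_characteristicSentence_iff M).1 (T.realize_sentence_of_mem (M := N) h)
  rw [hT.eq_completeTheory N, (StrongHomClass.elementarilyEquivalent e).completeTheory_eq]

theorem not_approximated_completeTheory [L.IsRelational] [Finite (Σ n, L.Relations n)]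
    (M : Type*) [L.Structure M] [Finite M] {𝒯 : Set L.Theory}
    (h𝒯 : ∀ T ∈ 𝒯, CompleteTheory T) : ¬ Approximated 𝒯 (L.completeTheory M) := by
  rintro ⟨hM, happrox⟩
  obtain ⟨T, hT, hχ⟩ := happrox _ (mem_completeTheory.2 (realize_characteristicSentence M))
  exact hM ((h𝒯 T hT).eq_completeTheory_of_characteristicSentence_mem hχ ▸ hT)

section ToggleRel

variable {M : Type*}

theorem Term.realize_congr {S S' : L.Structure M}
    (hfun : ∀ {n} (f : L.Functions n) x, S.funMap f x = S'.funMap f x)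
    {α : Type*} (v : α → M) (t : L.Term α) :
    @Term.realize L M S α v t = @Term.realize L M S' α v t := by
  induction t with
  | var => rfl
  | func f ts ih => exact (congrArg (S.funMap f) (funext ih)).trans (hfun f _)

theorem BoundedFormula.exists_finite_realize_congr {α : Type*} {k : ℕ}
    (φ : L.BoundedFormula α k) :
    ∃ s : Set (Σ n, L.Relations n), s.Finite ∧ ∀ S S' : L.Structure M,
      (∀ {n} (f : L.Functions n) x, S.funMap f x = S'.funMap f x) →
      (∀ R ∈ s, ∀ x, S.RelMap R.2 x ↔ S'.RelMap R.2 x) → ∀ v xs,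
      (@BoundedFormula.Realize L M S α k φ v xs ↔
        @BoundedFormula.Realize L M S' α k φ v xs) := by
  induction φ with
  | falsum => exact ⟨∅, finite_empty, fun _ _ _ _ _ _ => Iff.rfl⟩
  | equal t₁ t₂ =>
    refine ⟨∅, finite_empty, fun S S' hfun _ v xs => ?_⟩
    simp only [BoundedFormula.Realize, Term.realize_congr hfun]
  | @rel k n r ts =>
    refine ⟨{⟨n, r⟩}, finite_singleton _, fun S S' hfun hrel v xs => ?_⟩
    simp only [BoundedFormula.Realize, Term.realize_congr hfun]
    exact hrel ⟨n, r⟩ rfl _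
  | imp φ ψ ihφ ihψ =>
    obtain ⟨s, hs, hφ⟩ := ihφ
    obtain ⟨t, ht, hψ⟩ := ihψ
    refine ⟨s ∪ t, hs.union ht, fun S S' hfun hrel v xs => imp_congr ?_ ?_⟩
    · exact hφ S S' hfun (fun R hR => hrel R (Or.inl hR)) v xs
    · exact hψ S S' hfun (fun R hR => hrel R (Or.inr hR)) v xs
  | all φ ih =>
    obtain ⟨s, hs, hφ⟩ := ih
    exact ⟨s, hs, fun S S' hfun hrel v xs => forall_congr' fun a => hφ S S' hfun hrel v _⟩

open Classical in
@[reducible]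
noncomputable def toggleRel (S : L.Structure M) (R : Σ n, L.Relations n) : L.Structure M where
  funMap := S.funMap
  RelMap {n} r x :=
    if (⟨n, r⟩ : Σ n, L.Relations n) = R then ¬ ∃ y, S.RelMap R.2 y else S.RelMap r x

theorem toggleRel_relMap_self (S : L.Structure M) (R : Σ n, L.Relations n) (x : Fin R.1 → M) :
    (toggleRel S R).RelMap R.2 x ↔ ¬ ∃ y, S.RelMap R.2 y :=
  iff_of_eq (if_pos rfl)

theorem toggleRel_relMap_of_ne (S : L.Structure M) {R R' : Σ n, L.Relations n} (h : R' ≠ R)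
    (x : Fin R'.1 → M) : (toggleRel S R).RelMap R'.2 x ↔ S.RelMap R'.2 x :=
  iff_of_eq (if_neg h)

def existsRel (R : Σ n, L.Relations n) : L.Sentence :=
  (R.2.boundedFormula fun i => var (Sum.inr i)).exs

theorem realize_existsRel (S : L.Structure M) (R : Σ n, L.Relations n) :
    @Sentence.Realize L M S (existsRel R) ↔ ∃ x, S.RelMap R.2 x := by
  rw [existsRel, Sentence.Realize, BoundedFormula.realize_exs]
  rfl

theorem realize_existsRel_toggleRel [Nonempty M] (S : L.Structure M) (R : Σ n, L.Relations n) :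
    @Sentence.Realize L M (toggleRel S R) (existsRel R) ↔
      ¬ @Sentence.Realize L M S (existsRel R) := by
  simp only [realize_existsRel, toggleRel_relMap_self, exists_const]

theorem completeTheory_toggleRel_ne [Nonempty M] (S : L.Structure M) (R : Σ n, L.Relations n) :
    @Language.completeTheory L M (toggleRel S R) ≠ @Language.completeTheory L M S := by
  intro h
  have h' := realize_existsRel_toggleRel S R
  rw [← @mem_completeTheory L M (toggleRel S R), h, @mem_completeTheory L M S] at h'
  exact iff_not_self h'

theorem approximated_range_toggleRel [Infinite (Σ n, L.Relations n)] [Nonempty M]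
    (S : L.Structure M) :
    Approximated (range fun R => @Language.completeTheory L M (toggleRel S R))
      (@Language.completeTheory L M S) := by
  refine ⟨fun ⟨R, hR⟩ => completeTheory_toggleRel_ne S R hR, fun φ hφ => ?_⟩
  obtain ⟨s, hs, hφs⟩ := BoundedFormula.exists_finite_realize_congr (M := M) φ
  obtain ⟨R, hR⟩ := hs.infinite_compl.nonempty
  refine ⟨_, ⟨R, rfl⟩, (@mem_completeTheory L M (toggleRel S R) φ).2 ?_⟩
  refine (hφs S (toggleRel S R) (fun _ _ => rfl) (fun R' hR' x => ?_) _ _).1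
    ((@mem_completeTheory L M S φ).1 hφ)
  exact (toggleRel_relMap_of_ne S (ne_of_mem_of_not_mem hR' hR) x).symm

end ToggleRel

theorem unary_finite_model_approximable_iff_general
    {L : FirstOrder.Language.{u, v}} [L.IsRelational]
    (T : L.Theory) (hT : CompleteTheory T)
    (hfin : ∃ M : Theory.ModelType.{u, v, max u v} T, Finite M) :
    (∃ 𝒯 : Set L.Theory, (∀ S ∈ 𝒯, CompleteTheory S) ∧ Approximated 𝒯 T) ↔
      Infinite (Σ n, L.Relations n) := by
  obtain ⟨M, hM⟩ := hfin
  rw [hT.eq_completeTheory M]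
  refine ⟨fun ⟨𝒯, h𝒯, happrox⟩ => ?_,
    fun _ => ⟨_, ?_, approximated_range_toggleRel _⟩⟩
  · rw [← not_finite_iff_infinite]
    intro _
    exact not_approximated_completeTheory M h𝒯 happrox
  · rintro _ ⟨R, rfl⟩
    exact @completeTheory_completeTheory L M (toggleRel _ R) _

/-- a complete theory `T` of a purely unary relational language having a finite
model is approximable iff the language has infinitely many relation symbols. -/
theorem unary_finite_model_approximable_iff
    {L : FirstOrder.Language.{u, v}} [L.IsRelational]
    (hunary : ∀ n, n ≠ 1 → IsEmpty (L.Relations n))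
    (T : L.Theory) (hT : CompleteTheory T)
    (hfin : ∃ M : Theory.ModelType.{u, v, max u v} T, Finite M) :
    (∃ 𝒯 : Set L.Theory, (∀ S ∈ 𝒯, CompleteTheory S) ∧ Approximated 𝒯 T) ↔
      Infinite (Σ n, L.Relations n) :=
  unary_finite_model_approximable_iff_general T hT hfin

end Approx
end

section
/- Every complete theory T in a countable relational language L is either an ALU-theory or is 𝒯-approximated by some family 𝒯 of complete L-theories each of which is an ALU-theory. -/
open FirstOrder Language Set

universe u v

namespace Approx

variable {L : FirstOrder.Language.{u, v}}

/-- The language endomorphism relabelling relation symbols by an arity-preserving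
permutation (the identity on function symbols). -/
def relabel {L : FirstOrder.Language.{u, v}}
    (σ : ∀ n, L.Relations n ≃ L.Relations n) : L →ᴸ L :=
  ⟨fun _ f => f, fun n r => σ n r⟩

/-- `T` is almost language uniform (an ALU-theory): for each arity there is a partition of the
`n`-ary relation symbols into finitely many classes such that every arity-preserving
permutation of relation symbols preserving each class carries `T` onto `T`. -/
def IsALU {L : FirstOrder.Language.{u, v}} (T : L.Theory) : Prop :=
  ∃ part : ∀ n, L.Relations n → ℕ,
    (∀ n, (Set.range (part n)).Finite) ∧
    ∀ σ : ∀ n, L.Relations n ≃ L.Relations n,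
      (∀ n r, part n (σ n r) = part n r) → (relabel σ).onTheory T = T


section Helpers

variable {L : FirstOrder.Language.{u, v}} {α : Type*}

/-- Relation symbols occurring in a bounded formula. -/
def relsIn : ∀ {n : ℕ}, L.BoundedFormula α n → Set (Σ k, L.Relations k)
  | _, BoundedFormula.falsum => ∅
  | _, BoundedFormula.equal _ _ => ∅
  | _, BoundedFormula.rel R _ => {⟨_, R⟩}
  | _, BoundedFormula.imp f g => relsIn f ∪ relsIn g
  | _, BoundedFormula.all f => relsIn f

lemma relsIn_finite : ∀ {n : ℕ} (φ : L.BoundedFormula α n), (relsIn φ).Finite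
  | _, BoundedFormula.falsum => Set.finite_empty
  | _, BoundedFormula.equal _ _ => Set.finite_empty
  | _, BoundedFormula.rel _ _ => Set.finite_singleton _
  | _, BoundedFormula.imp f g => (relsIn_finite f).union (relsIn_finite g)
  | _, BoundedFormula.all f => relsIn_finite f

lemma term_realize_congr [L.IsRelational] {M : Type*} (S1 S2 : L.Structure M)
    {β : Type*} (t : L.Term β) (v : β → M) :
    @Term.realize L M S1 β v t = @Term.realize L M S2 β v t := by
  cases t with
  | var => rfl
  | func f _ => exact isEmptyElim f

lemma realize_congr [L.IsRelational] {M : Type*} (S1 S2 : L.Structure M) :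
    ∀ {n : ℕ} (φ : L.BoundedFormula α n),
      (∀ p ∈ relsIn φ, @Structure.RelMap L M S1 p.1 p.2 = @Structure.RelMap L M S2 p.1 p.2) →
      ∀ (vv : α → M) (xs : Fin n → M),
        (@BoundedFormula.Realize L M S1 α n φ vv xs ↔ @BoundedFormula.Realize L M S2 α n φ vv xs)
  | _, BoundedFormula.falsum, _, _, _ => Iff.rfl
  | _, BoundedFormula.equal t₁ t₂, _, vv, xs => by
      show @Term.realize L M S1 _ _ t₁ = @Term.realize L M S1 _ _ t₂ ↔
        @Term.realize L M S2 _ _ t₁ = @Term.realize L M S2 _ _ t₂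
      rw [term_realize_congr S1 S2, term_realize_congr S1 S2]
  | _, BoundedFormula.rel R ts, h, vv, xs => by
      show @Structure.RelMap L M S1 _ R (fun i => @Term.realize L M S1 _ _ (ts i)) ↔
        @Structure.RelMap L M S2 _ R (fun i => @Term.realize L M S2 _ _ (ts i))
      have h1 := h ⟨_, R⟩ rfl
      simp only [h1, funext fun i => term_realize_congr S1 S2 (ts i) _]
  | _, BoundedFormula.imp f g, h, vv, xs => by
      have hf := realize_congr S1 S2 f (fun p hp => h p (Or.inl hp)) vv xs
      have hg := realize_congr S1 S2 g (fun p hp => h p (Or.inr hp)) vv xs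
      show (_ → _) ↔ (_ → _)
      rw [hf, hg]
  | _, BoundedFormula.all f, h, vv, xs => by
      show (∀ x : M, _) ↔ (∀ x : M, _)
      exact forall_congr' fun x => realize_congr S1 S2 f h vv _


/-- The structure keeping interpretations of relation symbols in `s` and trivialising the rest. -/
def restrictStruct [L.IsRelational] {M : Type*} [L.Structure M]
    (s : Set (Σ k, L.Relations k)) : L.Structure M where
  funMap := fun {_} f => isEmptyElim f
  RelMap := fun {n} r v => (⟨n, r⟩ : Σ k, L.Relations k) ∈ s ∧ Structure.RelMap r v

lemma restrictStruct_relMap [L.IsRelational] {M : Type*} [L.Structure M]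
    (s : Set (Σ k, L.Relations k)) {n : ℕ} (r : L.Relations n) :
    @Structure.RelMap L M (restrictStruct s) n r =
      fun v => (⟨n, r⟩ : Σ k, L.Relations k) ∈ s ∧ Structure.RelMap r v :=
  rfl

lemma alu_aux [L.IsRelational] {M : Type w} [Nonempty M]
    (SM : L.Structure M) (s : Set (Σ k, L.Relations k)) (hs : s.Finite)
    (enc : (Σ k, L.Relations k) → ℕ) (henc : Function.Injective enc)
    (hout : ∀ (n : ℕ) (r r' : L.Relations n), (⟨n, r⟩ : Σ k, L.Relations k) ∉ s →
        (⟨n, r'⟩ : Σ k, L.Relations k) ∉ s →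
        @Structure.RelMap L M SM n r = @Structure.RelMap L M SM n r') :
    IsALU (@Language.completeTheory L M SM) := by
  classical
  letI := SM
  refine ⟨fun n r => if (⟨n, r⟩ : Σ k, L.Relations k) ∈ s then enc ⟨n, r⟩ + 1 else 0, ?_, ?_⟩
  · intro n
    apply Set.Finite.subset ((hs.image (fun p => enc p + 1)).insert 0)
    rintro x ⟨r, rfl⟩
    by_cases h : (⟨n, r⟩ : Σ k, L.Relations k) ∈ s
    · exact Set.mem_insert_iff.2 (Or.inr ⟨⟨n, r⟩, h, by simp [h]⟩)
    · simp [h]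
  · intro σ hσ
    have hfix : ∀ (n : ℕ) (r : L.Relations n),
        @Structure.RelMap L M SM n (σ n r) = @Structure.RelMap L M SM n r := by
      intro n r
      by_cases h : (⟨n, r⟩ : Σ k, L.Relations k) ∈ s
      · have h1 := hσ n r
        simp only [if_pos h] at h1
        by_cases h2 : (⟨n, σ n r⟩ : Σ k, L.Relations k) ∈ s
        · simp only [if_pos h2] at h1
          have h3 : (⟨n, σ n r⟩ : Σ k, L.Relations k) = ⟨n, r⟩ :=
            henc (Nat.succ_injective h1)
          have h4 : σ n r = r := by simpa using h3
          rw [h4]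
        · simp only [if_neg h2] at h1
          exact (Nat.succ_ne_zero _ h1.symm).elim
      · have h1 := hσ n r
        simp only [if_neg h] at h1
        have h2 : (⟨n, σ n r⟩ : Σ k, L.Relations k) ∉ s := by
          intro hmem; simp only [if_pos hmem] at h1; simp at h1
        exact hout n _ _ h2 h
    haveI hexp : (relabel σ).IsExpansionOn M :=
      ⟨fun f _ => isEmptyElim f, fun R x => congrFun (hfix _ R) x⟩
    set σ' : ∀ n, L.Relations n ≃ L.Relations n := fun n => (σ n).symm with hσ'
    have hfix' : ∀ (n : ℕ) (r : L.Relations n),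
        @Structure.RelMap L M SM n (σ' n r) = @Structure.RelMap L M SM n r := by
      intro n r
      have := hfix n ((σ n).symm r)
      rw [Equiv.apply_symm_apply] at this
      exact this.symm
    haveI hexp' : (relabel σ').IsExpansionOn M :=
      ⟨fun f _ => isEmptyElim f, fun R x => congrFun (hfix' _ R) x⟩
    ext ψ
    simp only [LHom.onTheory, Set.mem_image, mem_completeTheory]
    constructor
    · rintro ⟨ψ0, hψ0, rfl⟩
      exact ((relabel σ).realize_onSentence (M := M) ψ0).2 hψ0
    · intro hψ
      refine ⟨(relabel σ').onSentence ψ, ((relabel σ').realize_onSentence (M := M) ψ).2 hψ, ?_⟩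
      have hco : (relabel σ).comp (relabel σ') = LHom.id L :=
        LHom.funext (funext fun n => funext fun f => rfl)
          (funext fun n => funext fun r => (σ n).apply_symm_apply r)
      have h1 : (relabel σ).onSentence ((relabel σ').onSentence ψ) =
          ((relabel σ).comp (relabel σ')).onSentence ψ :=
        (congrFun (LHom.comp_onBoundedFormula (relabel σ) (relabel σ')) ψ).symm
      rw [h1, hco]
      exact congrFun LHom.id_onBoundedFormula ψ

lemma completeTheory_complete' {M : Type w} [Nonempty M] (SM : L.Structure M) :
    (@Language.completeTheory L M SM).IsSatisfiable ∧
      ∀ φ : L.Sentence, φ ∈ @Language.completeTheory L M SM ∨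
        φ.not ∈ @Language.completeTheory L M SM := by
  letI := SM
  refine ⟨Theory.Model.isSatisfiable M, fun φ => ?_⟩
  rw [mem_completeTheory, mem_completeTheory, Sentence.realize_not]
  exact em _


end Helpers

/-- every complete theory in a countable relational language is an ALU-theory or
is approximated by a family of complete ALU-theories. -/
theorem alu_or_alu_approximable
    {L : FirstOrder.Language.{u, v}} [L.IsRelational]
    [Countable (Σ n, L.Relations n)]
    (T : L.Theory) (hT : CompleteTheory T) :
    IsALU T ∨ ∃ 𝒯 : Set L.Theory,
      (∀ S ∈ 𝒯, CompleteTheory S ∧ IsALU S) ∧ Approximated 𝒯 T := by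
  classical
  by_cases hALU : IsALU T
  · exact Or.inl hALU
  right
  obtain ⟨M⟩ := hT.1
  obtain ⟨enc, henc⟩ := Countable.exists_injective_nat' (α := Σ n, L.Relations n)
  have hout : ∀ (φ : L.Sentence) (n : ℕ) (r r' : L.Relations n),
      (⟨n, r⟩ : Σ k, L.Relations k) ∉ relsIn φ → (⟨n, r'⟩ : Σ k, L.Relations k) ∉ relsIn φ →
      @Structure.RelMap L M (restrictStruct (relsIn φ)) n r =
        @Structure.RelMap L M (restrictStruct (relsIn φ)) n r' := by
    intro φ n r r' hr hr'
    rw [restrictStruct_relMap, restrictStruct_relMap]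
    funext x
    apply propext
    constructor
    · rintro ⟨hmem, -⟩; exact absurd hmem hr
    · rintro ⟨hmem, -⟩; exact absurd hmem hr'
  have hALUth : ∀ φ : L.Sentence,
      IsALU (@Language.completeTheory L M (restrictStruct (relsIn φ))) := fun φ =>
    alu_aux (restrictStruct (relsIn φ)) (relsIn φ) (relsIn_finite φ) enc henc (hout φ)
  have hagree : ∀ φ : L.Sentence, ∀ p ∈ relsIn φ,
      @Structure.RelMap L M inferInstance p.1 p.2 =
        @Structure.RelMap L M (restrictStruct (relsIn φ)) p.1 p.2 := by
    rintro φ ⟨n, r⟩ hp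
    rw [restrictStruct_relMap]
    funext x
    exact (propext (and_iff_right hp)).symm
  refine ⟨{Th | ∃ φ ∈ T, Th = @Language.completeTheory L M (restrictStruct (relsIn φ))},
    ?_, ?_, ?_⟩
  · rintro S ⟨φ, -, rfl⟩
    exact ⟨completeTheory_complete' _, hALUth φ⟩
  · rintro ⟨φ, -, hTeq⟩
    exact hALU (hTeq ▸ hALUth φ)
  · intro φ hφ
    refine ⟨_, ⟨φ, hφ, rfl⟩, ?_⟩
    have h0 : M ⊨ φ := T.realize_sentence_of_mem hφ
    exact (realize_congr (inferInstance : L.Structure M) (restrictStruct (relsIn φ)) φ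
      (hagree φ) _ _).1 h0

end Approx
end

section
/- A family 𝒯 of complete theories of a relational language L contains an approximating subfamily — i.e., there exist 𝒯' ⊆ 𝒯 and a complete theory T that is 𝒯'-approximated — if and only if 𝒯 is infinite. -/
/-! A finite family of complete theories cannot approximate a complete theory `T`: the conjunction
of sentences of `T`, one refuted by each member, lies in no member. Conversely, the limit of an
infinite family along a non-principal ultrafilter is a complete theory each of whose sentences lies
in infinitely many members, so the family with that limit removed approximates it. -/

open FirstOrder Language Set

universe u v

namespace FirstOrder.Language.Theory

variable {L : Language.{u, v}} {T S : L.Theory}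

theorem IsMaximal.eq_of_subset (hT : T.IsMaximal) (hS : S.IsSatisfiable) (hTS : T ⊆ S) :
    T = S := by
  refine hTS.antisymm fun φ hφS => (hT.mem_or_not_mem φ).resolve_right fun hφT => ?_
  obtain ⟨M⟩ := hS
  exact (Sentence.realize_not M).1 (realize_sentence_of_mem S (hTS hφT))
    (realize_sentence_of_mem S hφS)

theorem IsMaximal.exists_mem_notMem_of_ne (hT : T.IsMaximal) (hS : S.IsSatisfiable)
    (hTS : T ≠ S) : ∃ φ ∈ T, φ ∉ S := by
  by_contra! h
  exact hTS (hT.eq_of_subset hS h)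

theorem IsMaximal.iInf_mem_iff {β : Type*} [Finite β] (hT : T.IsMaximal) (f : β → L.Sentence) :
    BoundedFormula.iInf f ∈ T ↔ ∀ b, f b ∈ T := by
  simp only [hT.mem_iff_models, models_sentence_iff, Sentence.Realize, Formula.Realize,
    BoundedFormula.realize_iInf]
  exact forall_comm

theorem IsMaximal.exists_mem_forall_notMem {𝒮 : Set L.Theory} (h𝒮 : 𝒮.Finite) (hT : T.IsMaximal)
    (h𝒮max : ∀ S ∈ 𝒮, S.IsMaximal) (hT𝒮 : T ∉ 𝒮) : ∃ φ ∈ T, ∀ S ∈ 𝒮, φ ∉ S := by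
  have : Finite 𝒮 := h𝒮.to_subtype
  choose ψ hψT hψS using fun S : 𝒮 =>
    hT.exists_mem_notMem_of_ne (h𝒮max S S.2).1 fun h => hT𝒮 (h ▸ S.2)
  refine ⟨BoundedFormula.iInf ψ, (hT.iInf_mem_iff ψ).2 hψT, fun S hS hψ => ?_⟩
  exact hψS ⟨S, hS⟩ (((h𝒮max S hS).iInf_mem_iff ψ).1 hψ ⟨S, hS⟩)

def ultraLimit (U : Ultrafilter L.Theory) : L.Theory :=
  {φ | ∀ᶠ S in (U : Filter L.Theory), φ ∈ S}

theorem isMaximal_ultraLimit {U : Ultrafilter L.Theory}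
    (hU : ∀ᶠ S in (U : Filter L.Theory), S.IsMaximal) :
    (ultraLimit U).IsMaximal := by
  refine ⟨isSatisfiable_iff_isFinitelySatisfiable.2 fun T₀ hT₀ => ?_, fun φ => ?_⟩
  · have hfin : ∀ᶠ S in (U : Filter L.Theory), S.IsMaximal ∧ ∀ φ ∈ T₀, φ ∈ S :=
      hU.and ((Filter.eventually_all_finset T₀).2 fun φ hφ => hT₀ hφ)
    obtain ⟨S, hSmax, hT₀S⟩ := hfin.exists
    exact hSmax.1.mono hT₀S
  · refine (U.em (φ ∈ ·)).imp id fun hnot => ?_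
    filter_upwards [hU, hnot] with S hSmax hφS using (hSmax.mem_or_not_mem φ).resolve_left hφS

end FirstOrder.Language.Theory

namespace Approx

open Theory

-- `CompleteTheory` unfolds to `Theory.IsMaximal`, so the lemmas above apply to it directly.

variable {L : FirstOrder.Language.{u, v}}

theorem accPoint_ultraLimit {𝒯 : Set L.Theory} (h𝒯 : ∀ S ∈ 𝒯, CompleteTheory S)
    {U : Ultrafilter L.Theory} (hU : ↑U ≤ Filter.cofinite ⊓ Filter.principal 𝒯) :
    AccPoint 𝒯 (ultraLimit U) := by
  have h𝒯U : 𝒯 ∈ U := Filter.le_principal_iff.1 (hU.trans inf_le_right)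
  refine ⟨isMaximal_ultraLimit (Filter.mem_of_superset h𝒯U h𝒯), fun φ hφ => ?_⟩
  have hNbhd : ∀ᶠ S in U, S ∈ Nbhd 𝒯 φ := Filter.inter_mem h𝒯U hφ
  exact Filter.frequently_cofinite_mem_iff_infinite.1
    (hNbhd.frequently.filter_mono (hU.trans inf_le_left))

theorem exists_accPoint_of_infinite {𝒯 : Set L.Theory} (h𝒯 : ∀ S ∈ 𝒯, CompleteTheory S)
    (hinf : 𝒯.Infinite) : ∃ T, AccPoint 𝒯 T :=
  have := hinf.cofinite_inf_principal_neBot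
  ⟨_, accPoint_ultraLimit h𝒯 (Ultrafilter.of_le _)⟩

theorem AccPoint.approximated_diff_singleton {𝒯 : Set L.Theory} {T : L.Theory}
    (hT : AccPoint 𝒯 T) : Approximated (𝒯 \ {T}) T := by
  refine ⟨fun h => h.2 rfl, fun φ hφ => ?_⟩
  obtain ⟨S, ⟨hS𝒯, hφS⟩, hST⟩ := ((hT.2 φ hφ).sdiff (finite_singleton T)).nonempty
  exact ⟨S, ⟨hS𝒯, hST⟩, hφS⟩

theorem Approximated.infinite {𝒯 : Set L.Theory} {T : L.Theory} (hT : CompleteTheory T)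
    (h𝒯 : ∀ S ∈ 𝒯, CompleteTheory S) (happrox : Approximated 𝒯 T) : 𝒯.Infinite := by
  intro hfin
  obtain ⟨φ, hφT, hφ𝒯⟩ := IsMaximal.exists_mem_forall_notMem hfin hT h𝒯 happrox.1
  obtain ⟨S, hS𝒯, hφS⟩ := happrox.2 φ hφT
  exact hφ𝒯 S hS𝒯 hφS

theorem exists_approximating_subfamily_iff_infinite_general
    {L : FirstOrder.Language.{u, v}}
    (𝒯 : Set L.Theory) (h𝒯 : ∀ S ∈ 𝒯, CompleteTheory S) :
    (∃ 𝒯' ⊆ 𝒯, ∃ T : L.Theory, CompleteTheory T ∧ Approximated 𝒯' T) ↔ 𝒯.Infinite := by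
  constructor
  · rintro ⟨𝒯', h𝒯', T, hT, happrox⟩
    exact (happrox.infinite hT fun S hS => h𝒯 S (h𝒯' hS)).mono h𝒯'
  · intro hinf
    obtain ⟨T, hT⟩ := exists_accPoint_of_infinite h𝒯 hinf
    exact ⟨𝒯 \ {T}, sdiff_subset, T, hT.1, hT.approximated_diff_singleton⟩

/-- a family `𝒯` of complete theories of a relational language contains an
approximating subfamily iff `𝒯` is infinite. -/
theorem exists_approximating_subfamily_iff_infinite
    {L : FirstOrder.Language.{u, v}} [L.IsRelational]
    (𝒯 : Set L.Theory) (h𝒯 : ∀ S ∈ 𝒯, CompleteTheory S) :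
    (∃ 𝒯' ⊆ 𝒯, ∃ T : L.Theory, CompleteTheory T ∧ Approximated 𝒯' T) ↔ 𝒯.Infinite :=
  exists_approximating_subfamily_iff_infinite_general 𝒯 h𝒯

end Approx
end

section
/- Let 𝒯 be a family of complete theories and φ an L-sentence such that both 𝒯_φ and 𝒯_{¬φ} are infinite. Then 𝒯 has at least two accumulation points; more precisely, there exist distinct complete theories T₁ ≠ T₂, both accumulation points of 𝒯, with φ ∈ T₁ and ¬φ ∈ T₂ (hence the e-spectrum satisfies e-Sp(𝒯) ≥ 2). -/
open FirstOrder Language Set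

universe u v

namespace Approx

variable {L : FirstOrder.Language.{u, v}}

/-!
Accumulation points arise as ultralimits: for a non-principal ultrafilter `U` on theories
concentrating on `𝒯`, the sentences true in `U`-almost every theory form a complete theory,
and each of its sentences holds on a `U`-large, hence infinite, part of `𝒯`. Choosing `U`
to contain the infinite set `𝒯_φ`, respectively `𝒯_{¬φ}`, gives two accumulation points,
which differ since no satisfiable theory contains both `φ` and `¬φ`.
-/

open Filter

theorem infinite_of_mem_of_le_cofinite {α : Type*} {f : Filter α} [f.NeBot] (hf : f ≤ cofinite)
    {s : Set α} (hs : s ∈ f) : s.Infinite :=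
  frequently_cofinite_mem_iff_infinite.1 ((Eventually.frequently hs).filter_mono hf)

theorem notMem_not_of_mem {T : L.Theory} (hT : T.IsSatisfiable) {φ : L.Sentence} (hφ : φ ∈ T) :
    φ.not ∉ T := fun hnφ =>
  let ⟨M⟩ := hT
  (Sentence.realize_not M).1 (T.realize_sentence_of_mem hnφ) (T.realize_sentence_of_mem hφ)

def ultralimit (U : Ultrafilter L.Theory) : L.Theory :=
  {ψ | ∀ᶠ T in (U : Filter L.Theory), ψ ∈ T}

section ultralimit

variable {U : Ultrafilter L.Theory}

theorem isSatisfiable_ultralimit (hU : ∀ᶠ T in (U : Filter L.Theory), T.IsSatisfiable) :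
    (ultralimit U).IsSatisfiable := by
  rw [Theory.isSatisfiable_iff_isFinitelySatisfiable]
  intro T₀ hT₀
  obtain ⟨T, hT, hT₀T⟩ := (hU.and ((eventually_all_finset T₀).2 hT₀)).exists
  exact hT.mono hT₀T

theorem completeTheory_ultralimit (hU : ∀ᶠ T in (U : Filter L.Theory), CompleteTheory T) :
    CompleteTheory (ultralimit U) :=
  ⟨isSatisfiable_ultralimit (hU.mono fun _ hT => hT.1),
    fun ψ => Ultrafilter.eventually_or.1 (hU.mono fun _ hT => hT.2 ψ)⟩

theorem accPoint_ultralimit {𝒯 : Set L.Theory} (h𝒯 : ∀ S ∈ 𝒯, CompleteTheory S)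
    (hU𝒯 : 𝒯 ∈ U) (hU : (U : Filter L.Theory) ≤ cofinite) : AccPoint 𝒯 (ultralimit U) :=
  ⟨completeTheory_ultralimit (mem_of_superset hU𝒯 h𝒯),
    fun _ hψ => infinite_of_mem_of_le_cofinite hU (inter_mem hU𝒯 hψ)⟩

end ultralimit

theorem exists_accPoint_mem {𝒯 : Set L.Theory} (h𝒯 : ∀ S ∈ 𝒯, CompleteTheory S) {χ : L.Sentence}
    (h : (Nbhd 𝒯 χ).Infinite) : ∃ T, AccPoint 𝒯 T ∧ χ ∈ T := by
  have := h.cofinite_inf_principal_neBot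
  obtain ⟨U, hU⟩ := Ultrafilter.exists_le (cofinite ⊓ 𝓟 (Nbhd 𝒯 χ))
  have hχ : Nbhd 𝒯 χ ∈ U := le_principal_iff.1 (hU.trans inf_le_right)
  exact ⟨ultralimit U,
    accPoint_ultralimit h𝒯 (mem_of_superset hχ fun _ h => h.1) (hU.trans inf_le_left),
    mem_of_superset hχ fun _ h => h.2⟩

theorem two_accumulation_points_general
    {L : FirstOrder.Language.{u, v}}
    (𝒯 : Set L.Theory) (h𝒯 : ∀ S ∈ 𝒯, CompleteTheory S) (φ : L.Sentence)
    (h₁ : (Nbhd 𝒯 φ).Infinite) (h₂ : (Nbhd 𝒯 φ.not).Infinite) :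
    ∃ T₁ T₂ : L.Theory, T₁ ≠ T₂ ∧ AccPoint 𝒯 T₁ ∧ AccPoint 𝒯 T₂ ∧
      φ ∈ T₁ ∧ φ.not ∈ T₂ := by
  obtain ⟨T₁, hT₁, hφ₁⟩ := exists_accPoint_mem h𝒯 h₁
  obtain ⟨T₂, hT₂, hφ₂⟩ := exists_accPoint_mem h𝒯 h₂
  refine ⟨T₁, T₂, ?_, hT₁, hT₂, hφ₁, hφ₂⟩
  rintro rfl
  exact notMem_not_of_mem hT₁.1.1 hφ₁ hφ₂

/-- if both `𝒯_φ` and `𝒯_{¬φ}` are infinite then `𝒯` has at least two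
accumulation points, one containing `φ` and one containing `¬φ`. -/
theorem two_accumulation_points
    {L : FirstOrder.Language.{u, v}} [L.IsRelational]
    (𝒯 : Set L.Theory) (h𝒯 : ∀ S ∈ 𝒯, CompleteTheory S) (φ : L.Sentence)
    (h₁ : (Nbhd 𝒯 φ).Infinite) (h₂ : (Nbhd 𝒯 φ.not).Infinite) :
    ∃ T₁ T₂ : L.Theory, T₁ ≠ T₂ ∧ AccPoint 𝒯 T₁ ∧ AccPoint 𝒯 T₂ ∧
      φ ∈ T₁ ∧ φ.not ∈ T₂ :=
  two_accumulation_points_general 𝒯 h𝒯 φ h₁ h₂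

end Approx
end

section
/- Let 𝒯 be a family of complete theories and let (φ_i)_{i ∈ I} be a family of pairwise inconsistent L-sentences (for i ≠ j the set {φ_i, φ_j} is unsatisfiable) such that each 𝒯_{φ_i} is infinite. Then there exists an injective assignment i ↦ T_i of complete theories such that each T_i is an accumulation point of 𝒯 with φ_i ∈ T_i; in particular, 𝒯 has at least |I| accumulation points (so e-Sp(𝒯) ≥ |I|). -/
/-!
An accumulation point containing `φ` is the limit of the members of `𝒯_φ` along a
non-principal ultrafilter `U`: the sentences lying in `U`-almost every member. It is finitely
satisfiable, hence satisfiable by compactness; it is complete because `U` is an ultrafilter; and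
each of its sentences lies in infinitely many members of `𝒯` because `U` is non-principal.
The limits chosen for pairwise inconsistent `φ i` are pairwise distinct.
-/

open FirstOrder Language Set

universe u v

namespace Approx

variable {L : FirstOrder.Language.{u, v}}

def limTheory (F : Filter L.Theory) : L.Theory :=
  {ψ | ∀ᶠ S in F, ψ ∈ S}

theorem isSatisfiable_limTheory {F : Filter L.Theory} [F.NeBot]
    (hF : ∀ᶠ S in F, S.IsSatisfiable) : (limTheory F).IsSatisfiable := by
  rw [Theory.isSatisfiable_iff_isFinitelySatisfiable]
  intro T0 hT0
  have hT0_eventually : ∀ᶠ S in F, ∀ ψ ∈ T0, ψ ∈ S :=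
    (Filter.eventually_all_finset T0).2 fun ψ hψ => hT0 hψ
  obtain ⟨S, hS, hT0S⟩ := (hF.and hT0_eventually).exists
  exact hS.mono hT0S

theorem completeTheory_limTheory {U : Ultrafilter L.Theory}
    (hU : ∀ᶠ S in (U : Filter L.Theory), CompleteTheory S) :
    CompleteTheory (limTheory (U : Filter L.Theory)) := by
  refine ⟨isSatisfiable_limTheory (hU.mono fun S hS => hS.1), fun ψ => ?_⟩
  by_cases hψ : ψ ∈ limTheory (U : Filter L.Theory)
  · exact Or.inl hψ
  · right
    have hnψ : ∀ᶠ S in (U : Filter L.Theory), ψ ∉ S := Ultrafilter.eventually_not.2 hψ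
    filter_upwards [hU, hnψ] with S hS hψS
    exact (hS.2 ψ).resolve_left hψS

theorem nbhd_infinite_of_mem_limTheory {𝒯 : Set L.Theory} {F : Filter L.Theory} [F.NeBot]
    (hF : F ≤ Filter.cofinite) (h𝒯F : ∀ᶠ S in F, S ∈ 𝒯) {ψ : L.Sentence}
    (hψ : ψ ∈ limTheory F) : (Nbhd 𝒯 ψ).Infinite :=
  Set.infinite_iff_frequently_cofinite.2 ((h𝒯F.and hψ).frequently.filter_mono hF)

theorem accPoint_limTheory {𝒯 : Set L.Theory} (h𝒯 : ∀ S ∈ 𝒯, CompleteTheory S)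
    {U : Ultrafilter L.Theory} (hU : (U : Filter L.Theory) ≤ Filter.cofinite)
    (h𝒯U : ∀ᶠ S in (U : Filter L.Theory), S ∈ 𝒯) :
    AccPoint 𝒯 (limTheory (U : Filter L.Theory)) :=
  ⟨completeTheory_limTheory (h𝒯U.mono h𝒯),
    fun _ hψ => nbhd_infinite_of_mem_limTheory hU h𝒯U hψ⟩

theorem exists_accPoint_mem_of_nbhd_infinite {𝒯 : Set L.Theory}
    (h𝒯 : ∀ S ∈ 𝒯, CompleteTheory S) {φ : L.Sentence} (hφ : (Nbhd 𝒯 φ).Infinite) :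
    ∃ T, AccPoint 𝒯 T ∧ φ ∈ T := by
  have := hφ.cofinite_inf_principal_neBot
  set U := Ultrafilter.of (Filter.cofinite ⊓ Filter.principal (Nbhd 𝒯 φ))
  have hU : (U : Filter L.Theory) ≤ Filter.cofinite ⊓ Filter.principal (Nbhd 𝒯 φ) :=
    Ultrafilter.of_le _
  have hnbhd : ∀ᶠ S in (U : Filter L.Theory), S ∈ Nbhd 𝒯 φ :=
    Filter.le_principal_iff.1 (hU.trans inf_le_right)
  exact ⟨limTheory U, accPoint_limTheory h𝒯 (hU.trans inf_le_left) (hnbhd.mono fun _ h => h.1),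
    hnbhd.mono fun _ h => h.2⟩

theorem many_accumulation_points_general
    {L : FirstOrder.Language.{u, v}}
    (𝒯 : Set L.Theory) (h𝒯 : ∀ S ∈ 𝒯, CompleteTheory S)
    {I : Type*} (φ : I → L.Sentence)
    (hdisj : ∀ i j, i ≠ j → ¬ (({φ i, φ j} : L.Theory)).IsSatisfiable)
    (hinf : ∀ i, (Nbhd 𝒯 (φ i)).Infinite) :
    ∃ Tf : I → L.Theory, Function.Injective Tf ∧
      ∀ i, AccPoint 𝒯 (Tf i) ∧ φ i ∈ Tf i := by
  choose Tf hacc hmem using fun i => exists_accPoint_mem_of_nbhd_infinite h𝒯 (hinf i)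
  refine ⟨Tf, fun i j hij => ?_, fun i => ⟨hacc i, hmem i⟩⟩
  by_contra hne
  refine hdisj i j hne ((hacc i).1.1.mono ?_)
  rintro ψ (rfl | rfl)
  exacts [hmem i, hij ▸ hmem j]

/-- if `(φ i)_{i ∈ I}` are pairwise inconsistent sentences with all
neighbourhoods `𝒯_{φ i}` infinite, then there is an injective assignment of accumulation
points `T i` of `𝒯` with `φ i ∈ T i`; in particular `𝒯` has at least `|I|` accumulation
points. -/
theorem many_accumulation_points
    {L : FirstOrder.Language.{u, v}} [L.IsRelational]
    (𝒯 : Set L.Theory) (h𝒯 : ∀ S ∈ 𝒯, CompleteTheory S)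
    {I : Type*} (φ : I → L.Sentence)
    (hdisj : ∀ i j, i ≠ j → ¬ (({φ i, φ j} : L.Theory)).IsSatisfiable)
    (hinf : ∀ i, (Nbhd 𝒯 (φ i)).Infinite) :
    ∃ Tf : I → L.Theory, Function.Injective Tf ∧
      ∀ i, AccPoint 𝒯 (Tf i) ∧ φ i ∈ Tf i :=
  many_accumulation_points_general 𝒯 h𝒯 φ hdisj hinf

end Approx
end

section
/- An infinite family 𝒯 of complete theories is e-minimal — i.e., for every L-sentence φ, the set 𝒯_φ is finite or the set 𝒯_{¬φ} is finite — if and only if 𝒯 is e-categorical, i.e., 𝒯 has exactly one accumulation point. -/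
open FirstOrder Language Set

universe u v

namespace Approx

variable {L : FirstOrder.Language.{u, v}}

/-- A satisfiable theory cannot contain both a sentence and its negation. -/
lemma not_mem_both {S : L.Theory} (hS : S.IsSatisfiable) {φ : L.Sentence}
    (h1 : φ ∈ S) (h2 : φ.not ∈ S) : False := by
  obtain ⟨M⟩ := hS
  have hr1 : M ⊨ φ := M.is_model.realize_of_mem φ h1
  have hr2 : M ⊨ φ.not := M.is_model.realize_of_mem φ.not h2
  rw [Sentence.realize_not] at hr2
  exact hr2 hr1

lemma complete_not_iff {S : L.Theory} (hS : CompleteTheory S) (φ : L.Sentence) :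
    φ.not ∈ S ↔ φ ∉ S :=
  ⟨fun h h' => not_mem_both hS.1 h' h, fun h => (hS.2 φ).resolve_left h⟩

lemma complete_eq_of_subset {S T : L.Theory} (hS : CompleteTheory S) (hT : CompleteTheory T)
    (h : S ⊆ T) : S = T := by
  refine Set.Subset.antisymm h fun φ hφ => ?_
  by_contra hφS
  exact not_mem_both hT.1 hφ (h ((complete_not_iff hS φ).2 hφS))

lemma cover_nbhd (𝒯 : Set L.Theory) (h𝒯 : ∀ S ∈ 𝒯, CompleteTheory S) (φ : L.Sentence) :
    𝒯 ⊆ Nbhd 𝒯 φ ∪ Nbhd 𝒯 φ.not := by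
  intro S hS
  rcases (h𝒯 S hS).2 φ with h | h
  · exact Or.inl ⟨hS, h⟩
  · exact Or.inr ⟨hS, h⟩

lemma exists_ultrafilter {𝒯 : Set L.Theory} (hinf : 𝒯.Infinite) :
    ∃ U : Ultrafilter L.Theory, 𝒯 ∈ U ∧ ∀ A : Set L.Theory, A ∈ U → A.Infinite := by
  have hfreq : ∃ᶠ x in Filter.cofinite, x ∈ 𝒯 := Set.infinite_iff_frequently_cofinite.1 hinf
  have hne : (Filter.cofinite ⊓ Filter.principal 𝒯).NeBot := by
    rw [Filter.frequently_iff_neBot] at hfreq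
    simpa using hfreq
  refine ⟨Ultrafilter.of (Filter.cofinite ⊓ Filter.principal 𝒯), ?_, ?_⟩
  · exact Ultrafilter.of_le _ (Filter.mem_inf_of_right (Filter.mem_principal_self 𝒯))
  · intro A hA
    by_contra hfin
    rw [Set.not_infinite] at hfin
    have hc : Aᶜ ∈ Ultrafilter.of (Filter.cofinite ⊓ Filter.principal 𝒯) :=
      Ultrafilter.of_le _ (Filter.mem_inf_of_left (by simpa using hfin))
    exact (Ultrafilter.compl_notMem_iff.2 hA) hc

lemma accPoint_of_ultrafilter {𝒯 : Set L.Theory} (h𝒯 : ∀ S ∈ 𝒯, CompleteTheory S)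
    (U : Ultrafilter L.Theory) (hU𝒯 : 𝒯 ∈ U) (hUinf : ∀ A : Set L.Theory, A ∈ U → A.Infinite) :
    AccPoint 𝒯 {φ | Nbhd 𝒯 φ ∈ U} := by
  have hsat : Theory.IsSatisfiable ({φ | Nbhd 𝒯 φ ∈ U} : L.Theory) := by
    rw [Theory.isSatisfiable_iff_isFinitelySatisfiable]
    intro T0 hT0
    have hmem : (𝒯 ∩ ⋂ φ ∈ T0, Nbhd 𝒯 φ) ∈ U := by
      refine Filter.inter_mem hU𝒯 ?_
      exact (Filter.biInter_finset_mem T0).2 fun φ hφ => hT0 hφ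
    obtain ⟨S, hS𝒯, hSmem⟩ := U.nonempty_of_mem hmem
    refine Theory.IsSatisfiable.mono (h𝒯 S hS𝒯).1 ?_
    intro φ hφ
    simp only [Set.mem_iInter] at hSmem
    exact (hSmem φ hφ).2
  have hdec : ∀ φ : L.Sentence, φ ∈ {φ | Nbhd 𝒯 φ ∈ U} ∨ φ.not ∈ {φ | Nbhd 𝒯 φ ∈ U} := by
    intro φ
    have : Nbhd 𝒯 φ ∪ Nbhd 𝒯 φ.not ∈ U :=
      Filter.mem_of_superset hU𝒯 (cover_nbhd 𝒯 h𝒯 φ)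
    exact (Ultrafilter.union_mem_iff.1 this).imp id id
  exact ⟨⟨hsat, hdec⟩, fun φ hφ => hUinf _ hφ⟩

/-- an infinite family `𝒯` of complete theories is `e`-minimal (for every
sentence `φ`, `𝒯_φ` is finite or `𝒯_{¬φ}` is finite) iff `𝒯` is `e`-categorical (has exactly
one accumulation point). -/
theorem eMinimal_iff_eCategorical
    {L : FirstOrder.Language.{u, v}} [L.IsRelational]
    (𝒯 : Set L.Theory) (h𝒯 : ∀ S ∈ 𝒯, CompleteTheory S) (hinf : 𝒯.Infinite) :
    (∀ φ : L.Sentence, (Nbhd 𝒯 φ).Finite ∨ (Nbhd 𝒯 φ.not).Finite) ↔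
      (∃! T : L.Theory, AccPoint 𝒯 T) := by
  constructor
  · intro hmin
    obtain ⟨U, hU𝒯, hUinf⟩ := exists_ultrafilter hinf
    have hacc := accPoint_of_ultrafilter h𝒯 U hU𝒯 hUinf
    refine ⟨{φ | Nbhd 𝒯 φ ∈ U}, hacc, fun T hT => ?_⟩
    refine complete_eq_of_subset hT.1 hacc.1 fun φ hφ => ?_
    have hinfφ : (Nbhd 𝒯 φ).Infinite := hT.2 φ hφ
    have hfin : (Nbhd 𝒯 φ.not).Finite := (hmin φ).resolve_left (by exact fun h => hinfφ h)
    have hcup : Nbhd 𝒯 φ ∪ Nbhd 𝒯 φ.not ∈ U :=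
      Filter.mem_of_superset hU𝒯 (cover_nbhd 𝒯 h𝒯 φ)
    rcases Ultrafilter.union_mem_iff.1 hcup with h | h
    · exact h
    · exact absurd (hUinf _ h) (by rwa [Set.not_infinite])
  · rintro ⟨T₀, _, huniq⟩ φ
    by_contra hcon
    push_neg at hcon
    obtain ⟨hinf1, hinf2⟩ := hcon
    replace hinf1 : (Nbhd 𝒯 φ).Infinite := hinf1
    replace hinf2 : (Nbhd 𝒯 φ.not).Infinite := hinf2
    -- accumulation point containing ψ, built from the infinite neighbourhood of ψ
    have key : ∀ ψ : L.Sentence, (Nbhd 𝒯 ψ).Infinite →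
        ∃ T : L.Theory, AccPoint 𝒯 T ∧ ψ ∈ T := by
      intro ψ hψ
      obtain ⟨U, hU, hUinf⟩ := exists_ultrafilter hψ
      have hsub : Nbhd 𝒯 ψ ⊆ 𝒯 := fun S hS => hS.1
      have h𝒯' : ∀ S ∈ Nbhd 𝒯 ψ, CompleteTheory S := fun S hS => h𝒯 S (hsub hS)
      have hacc := accPoint_of_ultrafilter h𝒯' U hU hUinf
      refine ⟨_, ⟨hacc.1, fun χ hχ => ?_⟩, ?_⟩
      · exact (hacc.2 χ hχ).mono fun S hS => ⟨hsub hS.1, hS.2⟩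
      · show Nbhd (Nbhd 𝒯 ψ) ψ ∈ U
        refine Filter.mem_of_superset hU fun S hS => ⟨hS, hS.2⟩
    obtain ⟨T₁, hT₁, hφ₁⟩ := key φ hinf1
    obtain ⟨T₂, hT₂, hφ₂⟩ := key φ.not hinf2
    have : T₁ = T₂ := (huniq T₁ hT₁).trans (huniq T₂ hT₂).symm
    exact not_mem_both hT₁.1.1 hφ₁ (this ▸ hφ₂)

end Approx
end
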